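/- arXiv:1802.03163 — 4 statements merged into one kernel-verified Lean document; each statement's English description precedes it below -/
import Mathlib

section
/- Let X and E be locally solid Riesz spaces, and suppose X contains an order bounded zero neighborhood. Then every ob-bounded linear operator T : X → E is bb-bounded, i.e., T maps every topologically bounded set of X to a topologically bounded set of E. -/
open Filter Topology Bornology Set

section Defs
variable {E : Type*} [Lattice E] [AddCommGroup E]

/-- A set is solid if `|x| ≤ |y|` and `y ∈ A` imply `x ∈ A`. -/
def IsSolidSet (A : Set E) : Prop := ∀ ⦃x y : E⦄, |x| ≤ |y| → y ∈ A → x ∈ A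

/-- A set is order bounded if it is contained in some order interval `[-a, a]`. -/
def OrdBounded (B : Set E) : Prop := ∃ a : E, B ⊆ Set.Icc (-a) a

end Defs

/-- A locally solid Riesz space: the topology has a base at zero of solid sets. -/
def LocallySolid (E : Type*) [Lattice E] [AddCommGroup E] [TopologicalSpace E] : Prop :=
  ∀ V ∈ 𝓝 (0 : E), ∃ W ∈ 𝓝 (0 : E), W ⊆ V ∧ IsSolidSet W

open Pointwise

theorem OrdBounded.mono {G : Type*} [Lattice G] [AddCommGroup G] {s t : Set G}
    (ht : OrdBounded t) (hst : s ⊆ t) : OrdBounded s :=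
  let ⟨a, ha⟩ := ht
  ⟨a, hst.trans ha⟩

theorem OrdBounded.image_nsmul {G : Type*} [Lattice G] [AddCommGroup G] [AddLeftMono G]
    {s : Set G} (hs : OrdBounded s) (n : ℕ) : OrdBounded ((n • ·) '' s) := by
  obtain ⟨a, ha⟩ := hs
  refine ⟨n • a, ?_⟩
  rintro _ ⟨y, hy, rfl⟩
  refine ⟨?_, nsmul_le_nsmul_right (ha hy).2 n⟩
  simpa only [smul_neg] using nsmul_le_nsmul_right (ha hy).1 n

theorem Bornology.IsVonNBounded.ordBounded_of_mem_nhds {X : Type*} [Lattice X] [AddCommGroup X]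
    [AddLeftMono X] [Module ℝ X] [TopologicalSpace X] {V B : Set X}
    (hB : IsVonNBounded ℝ B) (hV : V ∈ 𝓝 0) (hVb : OrdBounded V) : OrdBounded B := by
  obtain ⟨r, -, hr⟩ := (hB hV).exists_pos
  -- The order need not be compatible with real scalars, so pass to a natural multiple.
  obtain ⟨n, hn⟩ := exists_nat_ge r
  have hBV : B ⊆ (n : ℝ) • V := hr _ (by simpa using hn)
  rw [← Set.image_smul] at hBV
  simp only [Nat.cast_smul_eq_nsmul] at hBV
  exact (hVb.image_nsmul n).mono hBV

theorem stmt2_general {X E : Type*} [Lattice X] [AddCommGroup X] [CovariantClass X X (· + ·) (· ≤ ·)] [Module ℝ X] [TopologicalSpace X] [AddCommGroup E] [Module ℝ E] [TopologicalSpace E]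
    (hnbhd : ∃ V ∈ 𝓝 (0 : X), OrdBounded V)
    (T : X →ₗ[ℝ] E)
    (hT : ∀ B : Set X, OrdBounded B → IsVonNBounded ℝ (T '' B)) :
    ∀ B : Set X, IsVonNBounded ℝ B → IsVonNBounded ℝ (T '' B) := by
  obtain ⟨V, hV, hVb⟩ := hnbhd
  exact fun B hB => hT B (hB.ordBounded_of_mem_nhds hV hVb)

theorem stmt2 {X E : Type*} [Lattice X] [AddCommGroup X] [CovariantClass X X (· + ·) (· ≤ ·)] [Module ℝ X] [TopologicalSpace X] [IsTopologicalAddGroup X] [ContinuousSMul ℝ X] [Lattice E] [AddCommGroup E] [CovariantClass E E (· + ·) (· ≤ ·)] [Module ℝ E] [TopologicalSpace E] [IsTopologicalAddGroup E] [ContinuousSMul ℝ E]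
    (hX : LocallySolid X) (hE : LocallySolid E)
    (hnbhd : ∃ V ∈ 𝓝 (0 : X), OrdBounded V)
    (T : X →ₗ[ℝ] E)
    (hT : ∀ B : Set X, OrdBounded B → IsVonNBounded ℝ (T '' B)) :
    ∀ B : Set X, IsVonNBounded ℝ B → IsVonNBounded ℝ (T '' B) :=
  stmt2_general hnbhd T hT
end

section
/- Let (E, τ) be a locally solid Riesz space with an order bounded zero neighborhood. If nets (T_α) and (S_α) of ob-bounded linear operators E → E both converge to zero uniformly on order bounded sets, then the net of compositions (S_α ∘ T_α) converges to zero uniformly on order bounded sets. -/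
open Filter Topology Bornology Set

theorem stmt8_general {E : Type*} [Lattice E] [AddCommGroup E] [Module ℝ E] [TopologicalSpace E]
    (hnbhd : ∃ V ∈ 𝓝 (0 : E), OrdBounded V)
    {ι : Type*} [SemilatticeSup ι]
    (T S : ι → E →ₗ[ℝ] E)
    (hT : ∀ B : Set E, OrdBounded B → ∀ V ∈ 𝓝 (0 : E),
      ∃ α₀ : ι, ∀ α ≥ α₀, ∀ x ∈ B, T α x ∈ V)
    (hS : ∀ B : Set E, OrdBounded B → ∀ V ∈ 𝓝 (0 : E),
      ∃ α₀ : ι, ∀ α ≥ α₀, ∀ x ∈ B, S α x ∈ V) :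
    ∀ B : Set E, OrdBounded B → ∀ V ∈ 𝓝 (0 : E),
      ∃ α₀ : ι, ∀ α ≥ α₀, ∀ x ∈ B, (S α ∘ₗ T α) x ∈ V := by
  intro B hB V hV
  -- `T α` eventually maps `B` into `V₀ ⊆ [-a, a]`, and `S α` is eventually small on `[-a, a]`.
  obtain ⟨V₀, hV₀, a, hV₀a⟩ := hnbhd
  obtain ⟨αT, hαT⟩ := hT B hB V₀ hV₀
  obtain ⟨αS, hαS⟩ := hS (Icc (-a) a) ⟨a, subset_rfl⟩ V hV
  refine ⟨αT ⊔ αS, fun α hα x hx => ?_⟩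
  exact hαS α (le_sup_right.trans hα) _ (hV₀a (hαT α (le_sup_left.trans hα) x hx))

theorem stmt8 {E : Type*} [Lattice E] [AddCommGroup E] [CovariantClass E E (· + ·) (· ≤ ·)] [Module ℝ E] [TopologicalSpace E] [IsTopologicalAddGroup E] [ContinuousSMul ℝ E]
    (hE : LocallySolid E)
    (hnbhd : ∃ V ∈ 𝓝 (0 : E), OrdBounded V)
    {ι : Type*} [Nonempty ι] [SemilatticeSup ι]
    (T S : ι → E →ₗ[ℝ] E)
    (hTob : ∀ α, ∀ B : Set E, OrdBounded B → IsVonNBounded ℝ (T α '' B))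
    (hSob : ∀ α, ∀ B : Set E, OrdBounded B → IsVonNBounded ℝ (S α '' B))
    (hT : ∀ B : Set E, OrdBounded B → ∀ V ∈ 𝓝 (0 : E),
      ∃ α₀ : ι, ∀ α ≥ α₀, ∀ x ∈ B, T α x ∈ V)
    (hS : ∀ B : Set E, OrdBounded B → ∀ V ∈ 𝓝 (0 : E),
      ∃ α₀ : ι, ∀ α ≥ α₀, ∀ x ∈ B, S α x ∈ V) :
    ∀ B : Set E, OrdBounded B → ∀ V ∈ 𝓝 (0 : E),
      ∃ α₀ : ι, ∀ α ≥ α₀, ∀ x ∈ B, (S α ∘ₗ T α) x ∈ V :=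
  stmt8_general hnbhd T S hT hS
end

section
/- Let X be a vector lattice and E an order complete locally solid Riesz space with an order bounded zero neighborhood. If nets (T_α), (S_α) of ob-bounded operators converge uniformly on order bounded sets to linear operators T and S respectively, then (T_α ∨ S_α) converges uniformly on order bounded sets to T ∨ S, where the supremum is given by the Riesz–Kantorovich formula (T ∨ S)(x) = sup{Tu + Sv : u, v ≥ 0, u + v = x} for x ≥ 0. -/
open Filter Topology Bornology Set

/-!
Fix a solid zero neighbourhood `W ⊆ V` and an order bounded zero neighbourhood `V₀ ⊆ [-e, e]`.
Shrinking `V₀` by a factor `2^k` gives a zero neighbourhood `U ⊆ [-c, c]` with `c = 2^{-k} e`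
and `2c ∈ W`; dividing by `2^k` inside the order is legitimate because `0 ≤ 2 • a → 0 ≤ a` in any
lattice-ordered group. Once `T_α - T` and `S_α - S` map `[-a, a]` into `U`, every Riesz–Kantorovich
sum `T_α u + S_α v` is within `2c` of `T u + S v`, so the two suprema differ by at most `2c` in
absolute value, and solidity of `W` finishes.
-/

section LatticeGroup

variable {E : Type*} [Lattice E] [AddCommGroup E] [AddLeftMono E]

lemma nonneg_of_two_pow_nsmul_nonneg {a : E} : ∀ {k : ℕ}, 0 ≤ 2 ^ k • a → 0 ≤ a
  | 0, h => by simpa using h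
  | k + 1, h => nonneg_of_two_pow_nsmul_nonneg <| nsmul_two_semiclosed <| by
      rwa [← mul_nsmul, ← pow_succ]

lemma le_of_two_pow_smul_le [Module ℝ E] {k : ℕ} {a b : E}
    (h : (2 : ℝ) ^ k • a ≤ (2 : ℝ) ^ k • b) : a ≤ b :=
  sub_nonneg.1 <| nonneg_of_two_pow_nsmul_nonneg (k := k) <| by
    rwa [← Nat.cast_smul_eq_nsmul ℝ, Nat.cast_pow, Nat.cast_ofNat, smul_sub, sub_nonneg]

lemma mem_Icc_of_two_pow_smul_mem_Icc [Module ℝ E] {k : ℕ} {z e : E}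
    (h : (2 : ℝ) ^ k • z ∈ Icc (-e) e) :
    z ∈ Icc (-(((2 : ℝ) ^ k)⁻¹ • e)) (((2 : ℝ) ^ k)⁻¹ • e) := by
  have he : (2 : ℝ) ^ k • ((2 : ℝ) ^ k)⁻¹ • e = e := smul_inv_smul₀ (by positivity) e
  exact ⟨le_of_two_pow_smul_le (by rw [smul_neg, he]; exact h.1),
    le_of_two_pow_smul_le (by rw [he]; exact h.2)⟩

lemma abs_sub_le_of_isLUB {A B : Set E} {p q c : E} (hp : IsLUB A p) (hq : IsLUB B q)
    (hAB : ∀ a ∈ A, ∃ b ∈ B, a ≤ b + c) (hBA : ∀ b ∈ B, ∃ a ∈ A, b ≤ a + c) :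
    |p - q| ≤ c := by
  have hpq : p ≤ q + c := hp.2 fun a ha => by
    obtain ⟨b, hb, hab⟩ := hAB a ha
    exact hab.trans (add_le_add (hq.1 hb) le_rfl)
  have hqp : q ≤ p + c := hq.2 fun b hb => by
    obtain ⟨a, ha, hba⟩ := hBA b hb
    exact hba.trans (add_le_add (hp.1 ha) le_rfl)
  exact abs_le'.2 ⟨sub_le_iff_le_add'.2 hpq, by rwa [neg_sub, sub_le_iff_le_add']⟩

end LatticeGroup

section RieszKantorovich

variable {X E : Type*} [AddCommMonoid X] [Preorder X] [AddLeftMono X]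
  [Lattice E] [AddCommGroup E] [AddLeftMono E]

/-- The set whose supremum is `(F ∨ G) x` by the Riesz–Kantorovich formula. -/
def rieszKantorovichSet (F G : X → E) (x : X) : Set E :=
  {y | ∃ u v : X, 0 ≤ u ∧ 0 ≤ v ∧ u + v = x ∧ y = F u + G v}

lemma abs_sub_le_of_isLUB_rieszKantorovichSet {F G F' G' : X → E} {x : X} {p p' c : E}
    (hp : IsLUB (rieszKantorovichSet F G x) p) (hp' : IsLUB (rieszKantorovichSet F' G' x) p')
    (hF : ∀ u, 0 ≤ u → u ≤ x → F u - F' u ∈ Icc (-c) c)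
    (hG : ∀ v, 0 ≤ v → v ≤ x → G v - G' v ∈ Icc (-c) c) :
    |p - p'| ≤ c + c := by
  refine abs_sub_le_of_isLUB hp hp' ?_ ?_
  · rintro _ ⟨u, v, hu, hv, rfl, rfl⟩
    have hFu := (hF u hu (le_add_of_nonneg_right hv)).2
    have hGv := (hG v hv (le_add_of_nonneg_left hu)).2
    refine ⟨F' u + G' v, ⟨u, v, hu, hv, rfl, rfl⟩, ?_⟩
    calc F u + G v = F' u + G' v + ((F u - F' u) + (G v - G' v)) := by abel
      _ ≤ F' u + G' v + (c + c) := add_le_add le_rfl (add_le_add hFu hGv)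
  · rintro _ ⟨u, v, hu, hv, rfl, rfl⟩
    have hFu := neg_le.2 (hF u hu (le_add_of_nonneg_right hv)).1
    have hGv := neg_le.2 (hG v hv (le_add_of_nonneg_left hu)).1
    refine ⟨F u + G v, ⟨u, v, hu, hv, rfl, rfl⟩, ?_⟩
    calc F' u + G' v = F u + G v + (-(F u - F' u) + -(G v - G' v)) := by abel
      _ ≤ F u + G v + (c + c) := add_le_add le_rfl (add_le_add hFu hGv)

end RieszKantorovich

lemma exists_add_self_mem_and_nhds_subset_Icc {E : Type*} [Lattice E] [AddCommGroup E]
    [AddLeftMono E] [Module ℝ E] [TopologicalSpace E] [ContinuousSMul ℝ E]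
    (hE : ∃ V ∈ 𝓝 (0 : E), OrdBounded V) {W : Set E} (hW : W ∈ 𝓝 (0 : E)) :
    ∃ c : E, c + c ∈ W ∧ ∃ U ∈ 𝓝 (0 : E), U ⊆ Icc (-c) c := by
  obtain ⟨V₀, hV₀, e, hV₀e⟩ := hE
  have hsmall : Tendsto (fun k : ℕ => (2 : ℝ) • ((2 : ℝ) ^ k)⁻¹ • e) atTop (𝓝 0) := by
    simpa using ((tendsto_inv_atTop_zero.comp
      (tendsto_pow_atTop_atTop_of_one_lt (one_lt_two (α := ℝ)))).smul_const e).const_smul (2 : ℝ)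
  obtain ⟨k, hk⟩ := (hsmall.eventually_mem hW).exists
  refine ⟨((2 : ℝ) ^ k)⁻¹ • e, by rwa [← two_smul ℝ], (fun z : E => (2 : ℝ) ^ k • z) ⁻¹' V₀,
    ?_, fun z hz => mem_Icc_of_two_pow_smul_mem_Icc (hV₀e hz)⟩
  exact (continuous_const_smul _).continuousAt.preimage_mem_nhds (by rwa [smul_zero])

theorem stmt9_general {X E : Type*} [Lattice X] [AddCommGroup X] [CovariantClass X X (· + ·) (· ≤ ·)] [Module ℝ X] [Lattice E] [AddCommGroup E] [CovariantClass E E (· + ·) (· ≤ ·)] [Module ℝ E] [TopologicalSpace E] [ContinuousSMul ℝ E]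
    (hE : LocallySolid E)
    (hnbhd : ∃ V ∈ 𝓝 (0 : E), OrdBounded V)
    {ι : Type*} [SemilatticeSup ι]
    (T S : ι → X →ₗ[ℝ] E) (Tl Sl : X →ₗ[ℝ] E)
    (hT : ∀ B : Set X, OrdBounded B → ∀ V ∈ 𝓝 (0 : E),
      ∃ α₀ : ι, ∀ α ≥ α₀, ∀ x ∈ B, T α x - Tl x ∈ V)
    (hS : ∀ B : Set X, OrdBounded B → ∀ V ∈ 𝓝 (0 : E),
      ∃ α₀ : ι, ∀ α ≥ α₀, ∀ x ∈ B, S α x - Sl x ∈ V)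
    -- the pointwise suprema given by the Riesz–Kantorovich formula
    (P : ι → X → E) (Pl : X → E)
    (hP : ∀ α, ∀ x : X, 0 ≤ x →
      IsLUB {y : E | ∃ u v : X, 0 ≤ u ∧ 0 ≤ v ∧ u + v = x ∧ y = T α u + S α v} (P α x))
    (hPl : ∀ x : X, 0 ≤ x →
      IsLUB {y : E | ∃ u v : X, 0 ≤ u ∧ 0 ≤ v ∧ u + v = x ∧ y = Tl u + Sl v} (Pl x)) :
    ∀ B : Set X, OrdBounded B → ∀ V ∈ 𝓝 (0 : E),
      ∃ α₀ : ι, ∀ α ≥ α₀, ∀ x ∈ B, 0 ≤ x → P α x - Pl x ∈ V := by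
  rintro B ⟨a, hBa⟩ V hV
  obtain ⟨W, hW, hWV, hWsolid⟩ := hE V hV
  obtain ⟨c, hcW, U, hU, hUc⟩ := exists_add_self_mem_and_nhds_subset_Icc hnbhd hW
  have hIcc : OrdBounded (Icc (-a) a) := ⟨a, subset_rfl⟩
  obtain ⟨α₁, hα₁⟩ := hT _ hIcc U hU
  obtain ⟨α₂, hα₂⟩ := hS _ hIcc U hU
  refine ⟨α₁ ⊔ α₂, fun α hα x hxB hx0 => hWV (hWsolid ?_ hcW)⟩
  have hxa := (hBa hxB).2
  have hdec : ∀ u, 0 ≤ u → u ≤ x → u ∈ Icc (-a) a := fun u hu hux =>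
    ⟨(neg_nonpos.2 (hx0.trans hxa)).trans hu, hux.trans hxa⟩
  calc |P α x - Pl x|
      ≤ c + c := abs_sub_le_of_isLUB_rieszKantorovichSet (hP α x hx0) (hPl x hx0)
        (fun u hu hux => hUc (hα₁ α (le_sup_left.trans hα) u (hdec u hu hux)))
        (fun v hv hvx => hUc (hα₂ α (le_sup_right.trans hα) v (hdec v hv hvx)))
    _ ≤ |c + c| := le_abs_self _

theorem stmt9 {X E : Type*} [Lattice X] [AddCommGroup X] [CovariantClass X X (· + ·) (· ≤ ·)] [Module ℝ X] [Lattice E] [AddCommGroup E] [CovariantClass E E (· + ·) (· ≤ ·)] [Module ℝ E] [TopologicalSpace E] [IsTopologicalAddGroup E] [ContinuousSMul ℝ E]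
    (hE : LocallySolid E)
    (hcomplete : ∀ A : Set E, A.Nonempty → BddAbove A → ∃ b, IsLUB A b)
    (hnbhd : ∃ V ∈ 𝓝 (0 : E), OrdBounded V)
    {ι : Type*} [Nonempty ι] [SemilatticeSup ι]
    (T S : ι → X →ₗ[ℝ] E) (Tl Sl : X →ₗ[ℝ] E)
    (hTob : ∀ α, ∀ B : Set X, OrdBounded B → IsVonNBounded ℝ (T α '' B))
    (hSob : ∀ α, ∀ B : Set X, OrdBounded B → IsVonNBounded ℝ (S α '' B))
    (hT : ∀ B : Set X, OrdBounded B → ∀ V ∈ 𝓝 (0 : E),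
      ∃ α₀ : ι, ∀ α ≥ α₀, ∀ x ∈ B, T α x - Tl x ∈ V)
    (hS : ∀ B : Set X, OrdBounded B → ∀ V ∈ 𝓝 (0 : E),
      ∃ α₀ : ι, ∀ α ≥ α₀, ∀ x ∈ B, S α x - Sl x ∈ V)
    -- the pointwise suprema given by the Riesz–Kantorovich formula
    (P : ι → X → E) (Pl : X → E)
    (hP : ∀ α, ∀ x : X, 0 ≤ x →
      IsLUB {y : E | ∃ u v : X, 0 ≤ u ∧ 0 ≤ v ∧ u + v = x ∧ y = T α u + S α v} (P α x))
    (hPl : ∀ x : X, 0 ≤ x →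
      IsLUB {y : E | ∃ u v : X, 0 ≤ u ∧ 0 ≤ v ∧ u + v = x ∧ y = Tl u + Sl v} (Pl x)) :
    ∀ B : Set X, OrdBounded B → ∀ V ∈ 𝓝 (0 : E),
      ∃ α₀ : ι, ∀ α ≥ α₀, ∀ x ∈ B, 0 ≤ x → P α x - Pl x ∈ V :=
  stmt9_general hE hnbhd T S Tl Sl hT hS P Pl hP hPl
end

section
/- Let X be a vector lattice and E a locally solid Riesz space. Suppose (T_α) is a net of ob-bounded linear operators X → E that is uniformly Cauchy on order bounded sets, E is topologically complete, and some order bounded set B ⊆ X is absorbing. Then there exists a linear operator T : X → E such that T_α(x) → T(x) for every x ∈ X, (T_α) converges to T uniformly on order bounded sets, and T is ob-bounded. -/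
open Filter Topology Bornology Set

/-!
Uniform Cauchyness on the (order bounded) singletons makes each net `T α x` Cauchy, so by
completeness it converges. Since `E` need not be Hausdorff, a limit is only determined up to
inseparability; composing a choice of limits with a linear projection along `closure {0}` makes
the choice linear. A uniformly Cauchy net converges uniformly to its pointwise limit, and a set
that is uniformly approximated by von Neumann bounded sets is von Neumann bounded.
-/

open scoped Pointwise

theorem ordBounded_singleton {E : Type*} [Lattice E] [AddCommGroup E] [AddLeftMono E] (x : E) :
    OrdBounded ({x} : Set E) :=
  ⟨|x|, singleton_subset_iff.2 ⟨neg_le.1 (neg_le_abs x), le_abs_self x⟩⟩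

section Inseparable

variable {K E : Type*} [DivisionRing K] [AddCommGroup E] [Module K E] [TopologicalSpace E]
  [IsTopologicalAddGroup E] [ContinuousConstSMul K E]

theorem exists_linearMap_inseparable :
    ∃ π : E →ₗ[K] E, (∀ a, Inseparable (π a) a) ∧ ∀ a b, Inseparable a b → π a = π b := by
  set N : Submodule K E := (⊥ : Submodule K E).topologicalClosure
  have hN : ∀ a b : E, Inseparable a b ↔ a - b ∈ N := fun a b => by
    rw [addGroup_inseparable_iff, ← SetLike.mem_coe, Submodule.topologicalClosure_coe,
      Submodule.bot_coe, Set.singleton_zero]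
  obtain ⟨C, hC⟩ := N.exists_isCompl
  refine ⟨C.projection N hC.symm, fun a => (hN _ _).2 ?_, fun a b hab => ?_⟩
  · rw [Submodule.projection_eq_self_sub_projection hC, sub_sub_cancel_left]
    exact N.neg_mem (Submodule.projection_apply_mem hC a)
  · rw [← sub_eq_zero, ← map_sub]
    exact Submodule.projection_apply_of_mem_right hC.symm ((hN a b).1 hab)

variable {X ι : Type*} [AddCommGroup X] [Module K X] {l : Filter ι} [l.NeBot]

theorem LinearMap.exists_tendsto_of_forall_exists_tendsto (T : ι → X →ₗ[K] E)
    (h : ∀ x, ∃ e, Tendsto (fun i => T i x) l (𝓝 e)) :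
    ∃ Tl : X →ₗ[K] E, ∀ x, Tendsto (fun i => T i x) l (𝓝 (Tl x)) := by
  choose L hL using h
  obtain ⟨π, hπ_insep, hπ_eq⟩ := exists_linearMap_inseparable (K := K) (E := E)
  have hπ_limit : ∀ {x e}, Tendsto (fun i => T i x) l (𝓝 e) → π (L x) = π e := fun he =>
    hπ_eq _ _ (tendsto_nhds_unique_inseparable (hL _) he)
  refine ⟨{ toFun := fun x => π (L x)
            map_add' := fun x y => by
              rw [hπ_limit (by simpa using (hL x).add (hL y)), map_add]
            map_smul' := fun c x => by
              rw [hπ_limit (by simpa using (hL x).const_smul c), map_smul]; rfl },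
    fun x => (hπ_insep (L x)).nhds_eq ▸ hL x⟩

end Inseparable

section VonNBounded

variable {𝕜 E : Type*} [NontriviallyNormedField 𝕜] [AddCommGroup E] [Module 𝕜 E] [TopologicalSpace E]
  [IsTopologicalAddGroup E] [ContinuousSMul 𝕜 E]

theorem Bornology.IsVonNBounded.of_forall_subset_add {A : Set E}
    (h : ∀ V ∈ 𝓝 (0 : E), ∃ S, IsVonNBounded 𝕜 S ∧ A ⊆ S + V) : IsVonNBounded 𝕜 A := by
  intro V hV
  obtain ⟨W, hW, hWV⟩ := exists_nhds_zero_half hV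
  have hW' : balancedCore 𝕜 W ∈ 𝓝 0 := balancedCore_mem_nhds_zero hW
  obtain ⟨S, hS, hAS⟩ := h _ hW'
  refine ((hS hW').add (balancedCore_balanced W).absorbs_self).mono ?_ hAS
  rintro _ ⟨v, hv, w, hw, rfl⟩
  exact hWV v (balancedCore_subset W hv) w (balancedCore_subset W hw)

end VonNBounded
section UniformAddGroup

variable {ι α E : Type*} [UniformSpace E] {F : ι → α → E} {f : α → E} {s : Set α}

theorem uniformCauchySeqOn_atTop_of_forall_sub_mem [AddGroup E] [IsUniformAddGroup E]
    [SemilatticeSup ι]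
    (h : ∀ V ∈ 𝓝 (0 : E), ∃ i₀, ∀ i ≥ i₀, ∀ j ≥ i₀, ∀ x ∈ s, F i x - F j x ∈ V) :
    UniformCauchySeqOn F atTop s := by
  rw [IsTopologicalAddGroup.uniformCauchySeqOn_iff _ _ _ IsUniformAddGroup.rightUniformSpace_eq]
  intro V hV
  obtain ⟨i₀, hi₀⟩ := h V hV
  rw [prod_atTop_atTop_eq]
  filter_upwards [eventually_ge_atTop (i₀, i₀)] with m hm
  exact hi₀ m.2 hm.2 m.1 hm.1

theorem TendstoUniformlyOn.exists_forall_sub_mem [AddGroup E] [IsUniformAddGroup E]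
    [SemilatticeSup ι] [Nonempty ι] (hF : TendstoUniformlyOn F f atTop s) {V : Set E}
    (hV : V ∈ 𝓝 0) : ∃ i₀, ∀ i ≥ i₀, ∀ x ∈ s, F i x - f x ∈ V :=
  eventually_atTop.1 <|
    (IsTopologicalAddGroup.tendstoUniformlyOn_iff _ _ _ _
      IsUniformAddGroup.rightUniformSpace_eq).1 hF V hV

theorem TendstoUniformlyOn.isVonNBounded_image {𝕜 : Type*} [NontriviallyNormedField 𝕜]
    [AddCommGroup E] [Module 𝕜 E] [IsUniformAddGroup E] [ContinuousSMul 𝕜 E] {p : Filter ι}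
    [p.NeBot] (hF : TendstoUniformlyOn F f p s) (hb : ∀ i, IsVonNBounded 𝕜 (F i '' s)) :
    IsVonNBounded 𝕜 (f '' s) := by
  refine .of_forall_subset_add fun V hV => ?_
  obtain ⟨i, hi⟩ := ((IsTopologicalAddGroup.tendstoUniformlyOn_iff _ _ _ _
      IsUniformAddGroup.rightUniformSpace_eq).1 hF (-V) (neg_mem_nhds_zero E hV)).exists
  refine ⟨F i '' s, hb i, ?_⟩
  rintro _ ⟨x, hx, rfl⟩
  exact ⟨F i x, mem_image_of_mem _ hx, f x - F i x, by simpa using hi x hx, add_sub_cancel _ _⟩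

end UniformAddGroup

theorem stmt13_general {X E : Type*} [Lattice X] [AddCommGroup X] [CovariantClass X X (· + ·) (· ≤ ·)] [Module ℝ X] [AddCommGroup E] [Module ℝ E]
    [UniformSpace E] [IsUniformAddGroup E] [ContinuousSMul ℝ E] [CompleteSpace E]
    {ι : Type*} [Nonempty ι] [SemilatticeSup ι]
    (T : ι → X →ₗ[ℝ] E)
    (hTob : ∀ α, ∀ B : Set X, OrdBounded B → IsVonNBounded ℝ (T α '' B))
    (hcauchy : ∀ B : Set X, OrdBounded B → ∀ V ∈ 𝓝 (0 : E),
      ∃ α₀ : ι, ∀ α ≥ α₀, ∀ β ≥ α₀, ∀ x ∈ B, T α x - T β x ∈ V) :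
    ∃ Tl : X →ₗ[ℝ] E,
      (∀ x : X, Tendsto (fun α => T α x) atTop (𝓝 (Tl x))) ∧
      (∀ B : Set X, OrdBounded B → ∀ V ∈ 𝓝 (0 : E),
        ∃ α₀ : ι, ∀ α ≥ α₀, ∀ x ∈ B, T α x - Tl x ∈ V) ∧
      (∀ B : Set X, OrdBounded B → IsVonNBounded ℝ (Tl '' B)) := by
  have hunif (B : Set X) (hB : OrdBounded B) : UniformCauchySeqOn (fun α => ⇑(T α)) atTop B :=
    uniformCauchySeqOn_atTop_of_forall_sub_mem (hcauchy B hB)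
  obtain ⟨Tl, hTl⟩ := LinearMap.exists_tendsto_of_forall_exists_tendsto T fun x =>
    cauchySeq_tendsto_of_complete ((hunif _ (ordBounded_singleton x)).cauchySeq (mem_singleton x))
  have hconv (B : Set X) (hB : OrdBounded B) : TendstoUniformlyOn (fun α => ⇑(T α)) Tl atTop B :=
    (hunif B hB).tendstoUniformlyOn_of_tendsto fun x _ => hTl x
  exact ⟨Tl, hTl, fun B hB V hV => (hconv B hB).exists_forall_sub_mem hV,
    fun B hB => (hconv B hB).isVonNBounded_image (hTob · B hB)⟩

theorem stmt13 {X E : Type*} [Lattice X] [AddCommGroup X] [CovariantClass X X (· + ·) (· ≤ ·)] [Module ℝ X] [Lattice E] [AddCommGroup E] [CovariantClass E E (· + ·) (· ≤ ·)] [Module ℝ E]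
    [UniformSpace E] [IsUniformAddGroup E] [ContinuousSMul ℝ E] [CompleteSpace E]
    (hE : LocallySolid E)
    {ι : Type*} [Nonempty ι] [SemilatticeSup ι]
    (T : ι → X →ₗ[ℝ] E)
    (hTob : ∀ α, ∀ B : Set X, OrdBounded B → IsVonNBounded ℝ (T α '' B))
    (hcauchy : ∀ B : Set X, OrdBounded B → ∀ V ∈ 𝓝 (0 : E),
      ∃ α₀ : ι, ∀ α ≥ α₀, ∀ β ≥ α₀, ∀ x ∈ B, T α x - T β x ∈ V)
    (B₀ : Set X) (hB₀ : OrdBounded B₀) (habs : Absorbent ℝ B₀) :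
    ∃ Tl : X →ₗ[ℝ] E,
      (∀ x : X, Tendsto (fun α => T α x) atTop (𝓝 (Tl x))) ∧
      (∀ B : Set X, OrdBounded B → ∀ V ∈ 𝓝 (0 : E),
        ∃ α₀ : ι, ∀ α ≥ α₀, ∀ x ∈ B, T α x - Tl x ∈ V) ∧
      (∀ B : Set X, OrdBounded B → IsVonNBounded ℝ (Tl '' B)) :=
  stmt13_general T hTob hcauchy
end
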